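/- Let φ be a nonerasing substitution on a finite alphabet A, prolongable over a letter a₁, and suppose the set of φ-bounded factors of the fixed point φ^∞(a₁) is finite. Then for every φ-growing letter t occurring in φ^∞(a₁) there exists n : ℕ such that the word φ^n [t] contains at least two occurrences of φ-growing letters. -/

import Mathlib

/-- Extension of a morphism `φ : A → List B` to finite words: `φ†(w) = (w.map φ).flatten`. -/
def applyMorph {A B : Type*} (φ : A → List B) (w : List A) : List B :=
  (w.map φ).flatten

/-- The finite word `v` occurs in the infinite word `W` at starting position `i`. -/
def OccursAt {A : Type*} (v : List A) (W : ℕ → A) (i : ℕ) : Prop :=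
  ∀ (j : ℕ) (hj : j < v.length), W (i + j) = v.get ⟨j, hj⟩

/-- The finite word `v` is a factor of the infinite word `W`. -/
def FactorOf {A : Type*} (v : List A) (W : ℕ → A) : Prop :=
  ∃ i, OccursAt v W i

/-- The finite word `v` is a prefix of the infinite word `W`. -/
def PrefixOf {A : Type*} (v : List A) (W : ℕ → A) : Prop :=
  OccursAt v W 0

/-- `W` is uniformly recurrent. -/
def UniformlyRecurrent {A : Type*} (W : ℕ → A) : Prop :=
  ∀ u, FactorOf u W → ∃ N, ∀ v, FactorOf v W → v.length = N → u <:+: v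

/-- `W` is eventually periodic. -/
def EventuallyPeriodic {A : Type*} (W : ℕ → A) : Prop :=
  ∃ k t : ℕ, 1 ≤ t ∧ ∀ i, k ≤ i → W (i + t) = W i

/-- The substitution `φ` is prolongable over the letter `a₁`. -/
def Prolongable {A : Type*} (φ : A → List A) (a₁ : A) : Prop :=
  ∃ v, φ a₁ = a₁ :: v ∧ ∀ k : ℕ, (applyMorph φ)^[k] v ≠ []

/-- The morphism `φ` is nonerasing. -/
def Nonerasing {A B : Type*} (φ : A → List B) : Prop :=
  ∀ a, φ a ≠ []

/-- `X` is the fixed point `φ^∞(a₁)`: every `φ^n([a₁])` is a prefix of `X`. -/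
def IsFixedPoint {A : Type*} (φ : A → List A) (a₁ : A) (X : ℕ → A) : Prop :=
  ∀ n : ℕ, PrefixOf ((applyMorph φ)^[n] [a₁]) X

/-- `W` is the infinite word `ψ(φ^∞(a₁))`: the words `ψ(φ^n([a₁]))` have unbounded
length and each of them is a prefix of `W`. -/
def IsMorphicWord {A B : Type*} (φ : A → List A) (ψ : A → List B) (a₁ : A)
    (W : ℕ → B) : Prop :=
  (∀ N : ℕ, ∃ k : ℕ, N ≤ (applyMorph ψ ((applyMorph φ)^[k] [a₁])).length) ∧
  ∀ k : ℕ, PrefixOf (applyMorph ψ ((applyMorph φ)^[k] [a₁])) W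

/-- The letter `a` is `φ`-growing: `n ↦ (φ^n [a]).length` is unbounded. -/
def GrowingLetter {A : Type*} (φ : A → List A) (a : A) : Prop :=
  ∀ N : ℕ, ∃ n : ℕ, N ≤ ((applyMorph φ)^[n] [a]).length

/-- The finite word `w` is `φ`-bounded: the sequence `n ↦ φ^n(w)` is eventually periodic. -/
def PhiBounded {A : Type*} (φ : A → List A) (w : List A) : Prop :=
  ∃ n₀ p : ℕ, 1 ≤ p ∧ ∀ n, n₀ ≤ n → (applyMorph φ)^[n + p] w = (applyMorph φ)^[n] w

/-- Letter `a` has growth order `(d, θ)` with respect to `φ`. -/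
def HasGrowthOrder {A : Type*} (φ : A → List A) (a : A) (d : ℕ) (θ : ℝ) : Prop :=
  1 ≤ θ ∧ ∃ c C : ℝ, 0 < c ∧ c ≤ C ∧ ∀ n : ℕ, 1 ≤ n →
    c * (n : ℝ) ^ d * θ ^ n ≤ (((applyMorph φ)^[n] [a]).length : ℝ) ∧
    (((applyMorph φ)^[n] [a]).length : ℝ) ≤ C * (n : ℝ) ^ d * θ ^ n

/-- The substitution `φ` is primitive. -/
def PrimitiveSubst {A : Type*} (φ : A → List A) : Prop :=
  ∃ k : ℕ, 1 ≤ k ∧ ∀ a b : A, b ∈ (applyMorph φ)^[k] [a]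

/-- `v` is a cyclic shift of `u`. -/
def IsCyclicShift {A : Type*} (v u : List A) : Prop :=
  ∃ x y : List A, u = x ++ y ∧ v = y ++ x

/-- `W` is purely periodic with (nonempty) period `u`. -/
def PurelyPeriodicWith {A : Type*} (W : ℕ → A) (u : List A) : Prop :=
  ∃ hu : u ≠ [], ∀ i : ℕ, W i = u.get ⟨i % u.length, Nat.mod_lt i (List.length_pos_iff.mpr hu)⟩

/-- `W` is recurrent: every factor occurs at arbitrarily large starting positions. -/
def RecurrentWord {A : Type*} (W : ℕ → A) : Prop :=
  ∀ u, FactorOf u W → ∀ N : ℕ, ∃ i, N ≤ i ∧ OccursAt u W i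

/-- The letter `a` is recurrent: it occurs in some `φ^k [a]`, `k ≥ 1`. -/
def RecurrentLetter {A : Type*} (φ : A → List A) (a : A) : Prop :=
  ∃ k : ℕ, 1 ≤ k ∧ a ∈ (applyMorph φ)^[k] [a]

/-!
Suppose no `φ^n [t]` contains two growing letters. Each contains at least one,
since `t` is growing, so `φ^n [t] = u a v` where every letter of `u` and `v` is non-growing.
Words made of non-growing letters have bounded images under the iterates of `φ`, hence are
`φ`-bounded over a finite alphabet; as `u` and `v` are factors of the fixed point, their lengths
are bounded by the maximal length `M` of a `φ`-bounded factor. Thus `|φ^n [t]| ≤ 2M + 1` for all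
`n`, contradicting the growth of `t`.
-/

section Morphism

variable {A : Type*} (φ : A → List A)

lemma applyMorph_append (u v : List A) :
    applyMorph φ (u ++ v) = applyMorph φ u ++ applyMorph φ v := by
  simp [applyMorph]

lemma applyMorph_iterate_append (n : ℕ) (u v : List A) :
    (applyMorph φ)^[n] (u ++ v) = (applyMorph φ)^[n] u ++ (applyMorph φ)^[n] v := by
  induction n generalizing u v with
  | zero => rfl
  | succ n ih => simp only [Function.iterate_succ_apply, applyMorph_append, ih]

lemma applyMorph_iterate_cons (n : ℕ) (a : A) (u : List A) :
    (applyMorph φ)^[n] (a :: u) = (applyMorph φ)^[n] [a] ++ (applyMorph φ)^[n] u :=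
  applyMorph_iterate_append φ n [a] u

lemma exists_length_iterate_lt_of_forall_not_growingLetter {w : List A}
    (hw : ∀ a ∈ w, ¬ GrowingLetter φ a) : ∃ N, ∀ m, ((applyMorph φ)^[m] w).length < N := by
  induction w with
  | nil =>
    refine ⟨1, fun m => ?_⟩
    rw [Function.iterate_fixed (by rfl)]
    simp
  | cons a u ih =>
    obtain ⟨Na, hNa⟩ : ∃ N, ∀ m, ((applyMorph φ)^[m] [a]).length < N := by
      simpa [GrowingLetter] using hw a List.mem_cons_self
    obtain ⟨Nu, hNu⟩ := ih fun b hb => hw b (List.mem_cons_of_mem a hb)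
    refine ⟨Na + Nu, fun m => ?_⟩
    rw [applyMorph_iterate_cons, List.length_append]
    exact Nat.add_lt_add (hNa m) (hNu m)

lemma phiBounded_of_length_iterate_lt [Finite A] {w : List A} {N : ℕ}
    (hN : ∀ m, ((applyMorph φ)^[m] w).length < N) : PhiBounded φ w := by
  have : Finite {l : List A // l.length < N} := (List.finite_length_lt A N).to_subtype
  obtain ⟨i, j, hij, heq⟩ := Finite.exists_ne_map_eq_of_infinite
    fun m : ℕ => (⟨(applyMorph φ)^[m] w, hN m⟩ : {l : List A // l.length < N})
  have key : ∀ i j : ℕ, i < j → (applyMorph φ)^[i] w = (applyMorph φ)^[j] w →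
      PhiBounded φ w := by
    intro i j hlt heq
    refine ⟨i, j - i, by omega, fun m hm => ?_⟩
    rw [show m + (j - i) = (m - i) + j by omega, Function.iterate_add_apply, ← heq,
      ← Function.iterate_add_apply, Nat.sub_add_cancel hm]
  rcases hij.lt_or_gt with h | h
  · exact key i j h (congrArg Subtype.val heq)
  · exact key j i h (congrArg Subtype.val heq).symm

lemma phiBounded_of_forall_not_growingLetter [Finite A] {w : List A}
    (hw : ∀ a ∈ w, ¬ GrowingLetter φ a) : PhiBounded φ w :=
  (exists_length_iterate_lt_of_forall_not_growingLetter φ hw).elim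
    fun _ hN => phiBounded_of_length_iterate_lt φ hN

lemma exists_growingLetter_mem_iterate {t : A} (ht : GrowingLetter φ t) (n : ℕ) :
    ∃ a ∈ (applyMorph φ)^[n] [t], GrowingLetter φ a := by
  by_contra! h
  obtain ⟨N, hN⟩ := exists_length_iterate_lt_of_forall_not_growingLetter φ h
  obtain ⟨m, hm⟩ := ht (N + 1 + ∑ k ∈ Finset.range n, ((applyMorph φ)^[k] [t]).length)
  rcases lt_or_ge m n with hmn | hmn
  · have := Finset.single_le_sum (f := fun k => ((applyMorph φ)^[k] [t]).length)
      (fun k _ => Nat.zero_le _) (Finset.mem_range.mpr hmn)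
    omega
  · have := hN (m - n)
    rw [← Function.iterate_add_apply, Nat.sub_add_cancel hmn] at this
    omega

end Morphism

section Factor

variable {A : Type*} {X : ℕ → A}

lemma PrefixOf.factorOf {P : List A} (hP : PrefixOf P X) : FactorOf P X := ⟨0, hP⟩

lemma FactorOf.of_infix {u v : List A} (hv : FactorOf v X) (huv : u <:+: v) : FactorOf u X := by
  obtain ⟨s, r, rfl⟩ := huv
  obtain ⟨i, hi⟩ := hv
  refine ⟨i + s.length, fun j hj => ?_⟩
  have hlen : s.length + j < (s ++ u ++ r).length := by simp only [List.length_append]; omega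
  rw [Nat.add_assoc, hi (s.length + j) hlen]
  simp only [List.get_eq_getElem, List.append_assoc,
    List.getElem_append_right (Nat.le_add_right _ _), Nat.add_sub_cancel_left,
    List.getElem_append_left hj]

variable (φ : A → List A) {a₁ : A}

lemma lt_length_iterate_of_prolongable (hpro : Prolongable φ a₁) (n : ℕ) :
    n < ((applyMorph φ)^[n] [a₁]).length := by
  obtain ⟨v, hv, hvk⟩ := hpro
  induction n with
  | zero => simp
  | succ n ih =>
    have hsucc : (applyMorph φ)^[n + 1] [a₁]
        = (applyMorph φ)^[n] [a₁] ++ (applyMorph φ)^[n] v := by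
      rw [Function.iterate_succ_apply, show applyMorph φ [a₁] = a₁ :: v by simp [applyMorph, hv],
        applyMorph_iterate_cons]
    rw [hsucc, List.length_append]
    have := List.length_pos_iff.mpr (hvk n)
    omega

lemma OccursAt.infix_of_prefixOf {v P : List A} {i : ℕ} (hv : OccursAt v X i)
    (hP : PrefixOf P X) (hlen : i + v.length ≤ P.length) : v <:+: P := by
  have hvP : v = (P.drop i).take v.length := by
    apply List.ext_getElem
    · simp only [List.length_take, List.length_drop]; omega
    · intro j hj _
      have hXP := hP (i + j) (by omega)
      simp only [Nat.zero_add, List.get_eq_getElem] at hXP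
      rw [List.getElem_take, List.getElem_drop, ← hXP, hv j hj, List.get_eq_getElem]
  exact hvP ▸ (List.take_prefix _ _).isInfix.trans (List.drop_suffix i _).isInfix

lemma FactorOf.exists_infix_iterate (hX : IsFixedPoint φ a₁ X) (hpro : Prolongable φ a₁)
    {v : List A} (hv : FactorOf v X) : ∃ n, v <:+: (applyMorph φ)^[n] [a₁] := by
  obtain ⟨i, hi⟩ := hv
  refine ⟨i + v.length, hi.infix_of_prefixOf (hX _) ?_⟩
  exact lt_length_iterate_of_prolongable φ hpro _ |>.le

lemma factorOf_applyMorph (hX : IsFixedPoint φ a₁ X) (hpro : Prolongable φ a₁)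
    {v : List A} (hv : FactorOf v X) : FactorOf (applyMorph φ v) X := by
  obtain ⟨n, s, r, hsr⟩ := hv.exists_infix_iterate φ hX hpro
  refine (hX (n + 1)).factorOf.of_infix ⟨applyMorph φ s, applyMorph φ r, ?_⟩
  rw [Function.iterate_succ_apply', ← hsr, applyMorph_append, applyMorph_append]

lemma factorOf_iterate (hX : IsFixedPoint φ a₁ X) (hpro : Prolongable φ a₁)
    {v : List A} (hv : FactorOf v X) (n : ℕ) : FactorOf ((applyMorph φ)^[n] v) X := by
  induction n with
  | zero => exact hv
  | succ n ih => rw [Function.iterate_succ_apply']; exact factorOf_applyMorph φ hX hpro ih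

lemma length_le_of_forall_ne_not_growingLetter [Finite A] {M : ℕ}
    (hM : ∀ u, FactorOf u X → PhiBounded φ u → u.length ≤ M)
    {w : List A} (hw : FactorOf w X) (i : Fin w.length)
    (hi : ∀ j, j ≠ i → ¬ GrowingLetter φ (w.get j)) : w.length ≤ 2 * M + 1 := by
  have hrest : ∀ a ∈ w.eraseIdx i, ¬ GrowingLetter φ a := by
    intro a ha
    obtain ⟨k, hk, hki, rfl⟩ := List.mem_eraseIdx_iff_getElem.mp ha
    exact hi ⟨k, hk⟩ (Fin.ne_of_val_ne hki)
  rw [List.eraseIdx_eq_take_drop_succ] at hrest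
  have htake := hM _ (hw.of_infix (List.take_prefix _ _).isInfix)
    (phiBounded_of_forall_not_growingLetter φ fun a ha => hrest a (List.mem_append_left _ ha))
  have hdrop := hM _ (hw.of_infix (List.drop_suffix _ _).isInfix)
    (phiBounded_of_forall_not_growingLetter φ fun a ha => hrest a (List.mem_append_right _ ha))
  simp only [List.length_take, List.length_drop] at htake hdrop
  omega

end Factor

theorem two_growing_letters_in_image_general {A : Type*} [Fintype A]
    (φ : A → List A) (a₁ : A) (hpro : Prolongable φ a₁)
    (X : ℕ → A) (hX : IsFixedPoint φ a₁ X)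
    (hfin : {w : List A | FactorOf w X ∧ PhiBounded φ w}.Finite) :
    ∀ t : A, GrowingLetter φ t → (∃ n : ℕ, X n = t) →
      ∃ (n : ℕ) (i j : Fin ((applyMorph φ)^[n] [t]).length),
        i ≠ j ∧
        GrowingLetter φ (((applyMorph φ)^[n] [t]).get i) ∧
        GrowingLetter φ (((applyMorph φ)^[n] [t]).get j) := by
  rintro t ht ⟨n₀, rfl⟩
  by_contra! hcon
  obtain ⟨M, hM⟩ := (hfin.image List.length).bddAbove
  have hft : FactorOf [X n₀] X := ⟨n₀, by simp [OccursAt]⟩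
  obtain ⟨n, hn⟩ := ht (2 * M + 2)
  obtain ⟨a, ha, hag⟩ := exists_growingLetter_mem_iterate φ ht n
  obtain ⟨i, rfl⟩ := List.get_of_mem ha
  have := length_le_of_forall_ne_not_growingLetter φ (fun u hu hb => hM ⟨u, ⟨hu, hb⟩, rfl⟩)
    (factorOf_iterate φ hX hpro hft n) i fun j hji => hcon n i j hji.symm hag
  omega

/-- if the set of `φ`-bounded factors is finite, every growing
letter occurring in the fixed point eventually produces two growing letters. -/
theorem two_growing_letters_in_image {A : Type*} [Fintype A]
    (φ : A → List A) (a₁ : A) (hne : Nonerasing φ) (hpro : Prolongable φ a₁)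
    (X : ℕ → A) (hX : IsFixedPoint φ a₁ X)
    (hfin : {w : List A | FactorOf w X ∧ PhiBounded φ w}.Finite) :
    ∀ t : A, GrowingLetter φ t → (∃ n : ℕ, X n = t) →
      ∃ (n : ℕ) (i j : Fin ((applyMorph φ)^[n] [t]).length),
        i ≠ j ∧
        GrowingLetter φ (((applyMorph φ)^[n] [t]).get i) ∧
        GrowingLetter φ (((applyMorph φ)^[n] [t]).get j) :=
  two_growing_letters_in_image_general φ a₁ hpro X hX hfin
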